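/- arXiv:1212.0981 — 2 statements merged into one kernel-verified Lean document; each statement's English description precedes it below -/
import Mathlib

section
/- Let φ be a conformal immersion on an open set U ⊆ ℝ² with conformal factor λ, with unit normal n := (φ_u × φ_v)/‖φ_u × φ_v‖, mean curvature H := ⟨Δφ, n⟩/(2λ²), and μ := (∂_z φ_z, n). Then the Codazzi equation holds at every point of U: ∂_z̄ μ = (λ²/2) ∂_z H. -/
open Complex

noncomputable section

/-- Euclidean 3-space. -/
abbrev E3 : Type := EuclideanSpace ℝ (Fin 3)

/-- Partial derivative in the first (u) coordinate direction. -/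
def pu {F : Type} [NormedAddCommGroup F] [NormedSpace ℝ F]
    (f : ℝ × ℝ → F) (p : ℝ × ℝ) : F := fderiv ℝ f p (1, 0)

/-- Partial derivative in the second (v) coordinate direction. -/
def pv {F : Type} [NormedAddCommGroup F] [NormedSpace ℝ F]
    (f : ℝ × ℝ → F) (p : ℝ × ℝ) : F := fderiv ℝ f p (0, 1)

/-- Cross product on ℝ³. -/
def cross (a b : E3) : E3 :=
  (WithLp.equiv 2 (Fin 3 → ℝ)).symm
    ![a 1 * b 2 - a 2 * b 1, a 2 * b 0 - a 0 * b 2, a 0 * b 1 - a 1 * b 0]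

/-- The Euclidean inner product on ℝ³. -/
def ip (a b : E3) : ℝ := @inner ℝ _ _ a b

/-- `φ` is a smooth conformal immersion on the open set `U ⊆ ℝ²` with
(smooth, positive) conformal factor `lam`:  ⟨φ_u,φ_u⟩ = λ², ⟨φ_v,φ_v⟩ = λ²,
⟨φ_u,φ_v⟩ = 0 at every point of `U`. -/
def IsConfImm (U : Set (ℝ × ℝ)) (φ : ℝ × ℝ → E3) (lam : ℝ × ℝ → ℝ) : Prop :=
  IsOpen U ∧ ContDiffOn ℝ (⊤ : ℕ∞) φ U ∧ ContDiffOn ℝ (⊤ : ℕ∞) lam U ∧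
    ∀ p ∈ U, 0 < lam p ∧
      ip (pu φ p) (pu φ p) = (lam p) ^ 2 ∧
      ip (pv φ p) (pv φ p) = (lam p) ^ 2 ∧
      ip (pu φ p) (pv φ p) = 0

/-- Complexification ℝ³ ↪ ℂ³. -/
def toC (x : E3) : Fin 3 → ℂ := fun j => (x j : ℂ)

/-- Complex-bilinear dot product on ℂ³:  (a,b) = Σⱼ aⱼ bⱼ. -/
def cdot (a b : Fin 3 → ℂ) : ℂ := ∑ j, a j * b j

/-- ∂_z = ½(∂_u − i ∂_v) for maps into complex normed spaces. -/
def dz {F : Type} [NormedAddCommGroup F] [NormedSpace ℂ F]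
    (f : ℝ × ℝ → F) (p : ℝ × ℝ) : F :=
  (2 : ℂ)⁻¹ • (pu f p - Complex.I • pv f p)

/-- ∂_z̄ = ½(∂_u + i ∂_v) for maps into complex normed spaces. -/
def dzbar {F : Type} [NormedAddCommGroup F] [NormedSpace ℂ F]
    (f : ℝ × ℝ → F) (p : ℝ × ℝ) : F :=
  (2 : ℂ)⁻¹ • (pu f p + Complex.I • pv f p)

/-- `f_z := ½(f_u − i f_v) ∈ ℂ³` for a real-vector-valued map `f` (in particular `φ_z`). -/
def phiz (f : ℝ × ℝ → E3) (p : ℝ × ℝ) : Fin 3 → ℂ :=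
  (2 : ℂ)⁻¹ • (toC (pu f p) - Complex.I • toC (pv f p))

/-- `f_z̄ := ½(f_u + i f_v) ∈ ℂ³` for a real-vector-valued map `f` (in particular `φ_z̄`). -/
def phizbar (f : ℝ × ℝ → E3) (p : ℝ × ℝ) : Fin 3 → ℂ :=
  (2 : ℂ)⁻¹ • (toC (pu f p) + Complex.I • toC (pv f p))

/-- The unit normal n = (φ_u × φ_v)/‖φ_u × φ_v‖. -/
def nvec (φ : ℝ × ℝ → E3) (p : ℝ × ℝ) : E3 :=
  ‖cross (pu φ p) (pv φ p)‖⁻¹ • cross (pu φ p) (pv φ p)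

/-- Componentwise Laplacian Δ = ∂_uu + ∂_vv. -/
def lap {F : Type} [NormedAddCommGroup F] [NormedSpace ℝ F]
    (f : ℝ × ℝ → F) (p : ℝ × ℝ) : F := pu (pu f) p + pv (pv f) p

/-- Mean curvature H = ⟨Δφ, n⟩/(2λ²). -/
def mcurv (φ : ℝ × ℝ → E3) (lam : ℝ × ℝ → ℝ) (p : ℝ × ℝ) : ℝ :=
  ip (lap φ p) (nvec φ p) / (2 * (lam p) ^ 2)

/-- μ := (∂_z φ_z, n). -/
def muQ (φ : ℝ × ℝ → E3) (p : ℝ × ℝ) : ℂ :=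
  cdot (dz (phiz φ) p) (toC (nvec φ p))

open scoped ContDiff Topology

/-!
Write `ψ = φ_{zz̄} = Δφ/4`, so that `(ψ, n) = λ²H/2`. Differentiating the relations
`(φ_z, φ_z) = 0`, `(φ_z, φ_z̄) = λ²/2`, `(n, n) = 1` and `(φ_z, n) = 0` shows that `ψ` is
orthogonal to `φ_z` and `φ_z̄`, that `(φ_zz, φ_z) = 0`, `(φ_zz, φ_z̄) = ∂_z(λ²/2)` and
`(n_z̄, φ_z) = -λ²H/2`. Expanding in the frame `φ_z, φ_z̄, n`,
`(x, t) = (2/λ²)((x, φ_z)(t, φ_z̄) + (x, φ_z̄)(t, φ_z)) + (x, n)(t, n)`,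
gives `(ψ, n_z) = 0` and `(φ_zz, n_z̄) = -H ∂_z(λ²/2)`. Commuting `∂_z` and `∂_z̄`,
`∂_z̄ μ = (∂_z ψ, n) + (φ_zz, n_z̄) = ∂_z(λ²H/2) - H ∂_z(λ²/2) = (λ²/2) ∂_z H`.
-/

section VectorAlgebra

lemma ip_eq_sum (a b : E3) : ip a b = a 0 * b 0 + a 1 * b 1 + a 2 * b 2 := by
  simp [ip, PiLp.inner_apply, Fin.sum_univ_three, mul_comm]

lemma ofLp_cross (a b : E3) : (cross a b).ofLp =
    ![a 1 * b 2 - a 2 * b 1, a 2 * b 0 - a 0 * b 2, a 0 * b 1 - a 1 * b 0] := rfl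

lemma ip_smul_right (r : ℝ) (a b : E3) : ip a (r • b) = r * ip a b := inner_smul_right a b r

lemma ip_self_cross (a b : E3) : ip a (cross a b) = 0 := by
  simp [ip_eq_sum, ofLp_cross]; ring

lemma ip_cross_self (a b : E3) : ip b (cross a b) = 0 := by
  simp [ip_eq_sum, ofLp_cross]; ring

lemma ip_cross_cross (a b : E3) :
    ip (cross a b) (cross a b) = ip a a * ip b b - ip a b ^ 2 := by
  simp [ip_eq_sum, ofLp_cross]; ring

lemma cdot_eq_dotProduct (x y : Fin 3 → ℂ) : cdot x y = x ⬝ᵥ y := rfl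

lemma ip_comm (a b : E3) : ip a b = ip b a := real_inner_comm b a

lemma cdot_comm (x y : Fin 3 → ℂ) : cdot x y = cdot y x := dotProduct_comm x y

lemma cdot_toC (a b : E3) : cdot (toC a) (toC b) = ip a b := by
  simp [cdot, toC, ip_eq_sum, Fin.sum_univ_three]

lemma gram_mul_cdot (a b : E3) (x t : Fin 3 → ℂ) :
    ((ip a a * ip b b - ip a b ^ 2 : ℝ) : ℂ) * cdot x t
      = ip b b * (cdot x (toC a) * cdot t (toC a)) + ip a a * (cdot x (toC b) * cdot t (toC b))
        - ip a b * (cdot x (toC a) * cdot t (toC b) + cdot x (toC b) * cdot t (toC a))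
        + cdot x (toC (cross a b)) * cdot t (toC (cross a b)) := by
  simp only [cdot, toC, ip_eq_sum, ofLp_cross, Fin.sum_univ_three]
  push_cast
  ring

end VectorAlgebra

section Frame

open Complex

variable {φ : ℝ × ℝ → E3} {q : ℝ × ℝ}

lemma cdot_phiz (x : Fin 3 → ℂ) :
    cdot x (phiz φ q) = (2 : ℂ)⁻¹ * (cdot x (toC (pu φ q)) - I * cdot x (toC (pv φ q))) := by
  simp only [phiz, cdot_eq_dotProduct, dotProduct_smul, dotProduct_sub, smul_eq_mul]

lemma cdot_phizbar (x : Fin 3 → ℂ) :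
    cdot x (phizbar φ q) = (2 : ℂ)⁻¹ * (cdot x (toC (pu φ q)) + I * cdot x (toC (pv φ q))) := by
  simp only [phizbar, cdot_eq_dotProduct, dotProduct_smul, dotProduct_add, smul_eq_mul]

lemma cdot_smul_toC (x : Fin 3 → ℂ) (r : ℝ) (a : E3) :
    cdot x (toC (r • a)) = r * cdot x (toC a) := by
  simp only [cdot, toC, PiLp.smul_apply, smul_eq_mul, ofReal_mul, Finset.mul_sum]
  exact Finset.sum_congr rfl fun _ _ => by ring

lemma cdot_nvec_phiz : cdot (toC (nvec φ q)) (phiz φ q) = 0 := by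
  simp [cdot_phiz, nvec, cdot_toC, ip_comm _ (pu φ q), ip_comm _ (pv φ q), ip_smul_right,
    ip_self_cross, ip_cross_self]

lemma cdot_nvec_nvec (h : cross (pu φ q) (pv φ q) ≠ 0) :
    cdot (toC (nvec φ q)) (toC (nvec φ q)) = 1 := by
  rw [cdot_toC, ip, real_inner_self_eq_norm_sq, nvec, norm_smul, norm_inv, norm_norm,
    inv_mul_cancel₀ (norm_ne_zero_iff.2 h)]
  simp

end Frame

def IsConfImmAt (φ : ℝ × ℝ → E3) (lam : ℝ × ℝ → ℝ) (q : ℝ × ℝ) : Prop :=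
  0 < lam q ∧ ip (pu φ q) (pu φ q) = lam q ^ 2 ∧ ip (pv φ q) (pv φ q) = lam q ^ 2 ∧
    ip (pu φ q) (pv φ q) = 0

namespace IsConfImmAt

open Complex

variable {φ : ℝ × ℝ → E3} {lam : ℝ × ℝ → ℝ} {q : ℝ × ℝ} (hq : IsConfImmAt φ lam q)
include hq

lemma norm_cross : ‖cross (pu φ q) (pv φ q)‖ = lam q ^ 2 := by
  obtain ⟨-, huu, hvv, huv⟩ := hq
  have hsq : ‖cross (pu φ q) (pv φ q)‖ ^ 2 = (lam q ^ 2) ^ 2 := by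
    rw [← real_inner_self_eq_norm_sq, ← ip, ip_cross_cross, huu, hvv, huv]
    ring
  exact (pow_left_inj₀ (norm_nonneg _) (by positivity) two_ne_zero).1 hsq

lemma cross_ne_zero : cross (pu φ q) (pv φ q) ≠ 0 := by
  rw [← norm_ne_zero_iff, hq.norm_cross]
  exact pow_ne_zero 2 hq.1.ne'

lemma cdot_phiz_phiz : cdot (phiz φ q) (phiz φ q) = 0 := by
  obtain ⟨-, huu, hvv, huv⟩ := hq
  rw [cdot_phiz]
  simp only [cdot_comm (phiz φ q), cdot_phiz]
  simp only [cdot_toC, ip_comm (pv φ q) (pu φ q), huu, hvv, huv]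
  push_cast
  linear_combination ((lam q : ℂ) ^ 2 / 4) * I_sq

lemma cdot_phizbar_phizbar : cdot (phizbar φ q) (phizbar φ q) = 0 := by
  obtain ⟨-, huu, hvv, huv⟩ := hq
  rw [cdot_phizbar]
  simp only [cdot_comm (phizbar φ q), cdot_phizbar]
  simp only [cdot_toC, ip_comm (pv φ q) (pu φ q), huu, hvv, huv]
  push_cast
  linear_combination ((lam q : ℂ) ^ 2 / 4) * I_sq

lemma cdot_phiz_phizbar : cdot (phiz φ q) (phizbar φ q) = (lam q : ℂ) ^ 2 / 2 := by
  obtain ⟨-, huu, hvv, huv⟩ := hq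
  rw [cdot_phizbar]
  simp only [cdot_comm (phiz φ q), cdot_phiz]
  simp only [cdot_toC, ip_comm (pv φ q) (pu φ q), huu, hvv, huv]
  push_cast
  linear_combination (-(lam q : ℂ) ^ 2 / 4) * I_sq

lemma cdot_eq_frame (x t : Fin 3 → ℂ) :
    cdot x t = 2 / (lam q : ℂ) ^ 2 * (cdot x (phiz φ q) * cdot t (phizbar φ q)
        + cdot x (phizbar φ q) * cdot t (phiz φ q))
      + cdot x (toC (nvec φ q)) * cdot t (toC (nvec φ q)) := by
  have hgram := gram_mul_cdot (pu φ q) (pv φ q) x t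
  have hl : (lam q : ℂ) ≠ 0 := ofReal_ne_zero.2 hq.1.ne'
  rw [nvec, hq.norm_cross] at *
  obtain ⟨-, huu, hvv, huv⟩ := hq
  rw [huu, hvv, huv] at hgram
  rw [cdot_phiz, cdot_phiz, cdot_phizbar, cdot_phizbar, cdot_smul_toC, cdot_smul_toC]
  push_cast at hgram ⊢
  linear_combination (norm := skip) (1 / (lam q : ℂ) ^ 4) * hgram
    + (cdot x (toC (pv φ q)) * cdot t (toC (pv φ q)) / (lam q : ℂ) ^ 2) * I_sq
  field_simp
  ring

end IsConfImmAt

section Partials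

variable {E : Type} [NormedAddCommGroup E] [NormedSpace ℝ E] {U : Set (ℝ × ℝ)}
  {f : ℝ × ℝ → E} {p : ℝ × ℝ}

lemma pu_congr {g : ℝ × ℝ → E} (h : f =ᶠ[𝓝 p] g) : pu f p = pu g p := by
  rw [pu, pu, h.fderiv_eq]

lemma pv_congr {g : ℝ × ℝ → E} (h : f =ᶠ[𝓝 p] g) : pv f p = pv g p := by
  rw [pv, pv, h.fderiv_eq]

lemma ContDiffOn.differentiableAt_of_isOpen (hf : ContDiffOn ℝ ∞ f U) (hU : IsOpen U)
    (hp : p ∈ U) : DifferentiableAt ℝ f p :=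
  (hf.differentiableOn (by simp)).differentiableAt (hU.mem_nhds hp)

lemma contDiffOn_pu (hU : IsOpen U) (hf : ContDiffOn ℝ ∞ f U) : ContDiffOn ℝ ∞ (pu f) U :=
  (hf.fderiv_of_isOpen hU (by simp)).clm_apply contDiffOn_const

lemma contDiffOn_pv (hU : IsOpen U) (hf : ContDiffOn ℝ ∞ f U) : ContDiffOn ℝ ∞ (pv f) U :=
  (hf.fderiv_of_isOpen hU (by simp)).clm_apply contDiffOn_const

lemma pu_pv_comm (hU : IsOpen U) (hf : ContDiffOn ℝ ∞ f U) (hp : p ∈ U) :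
    pu (pv f) p = pv (pu f) p := by
  have hd : DifferentiableAt ℝ (fderiv ℝ f) p :=
    (hf.fderiv_of_isOpen (m := ∞) hU (by simp)).differentiableAt_of_isOpen hU hp
  have hsymm := (hf.contDiffAt (hU.mem_nhds hp)).isSymmSndFDerivAt
    (by simp; exact WithTop.coe_le_coe.2 le_top) (1, 0) (0, 1)
  change fderiv ℝ (fun q => fderiv ℝ f q (0, 1)) p (1, 0)
    = fderiv ℝ (fun q => fderiv ℝ f q (1, 0)) p (0, 1)
  simpa [fderiv_clm_apply hd (differentiableAt_const _)] using hsymm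

end Partials

section Wirtinger

open Complex

variable {F : Type} [NormedAddCommGroup F] [NormedSpace ℂ F] {U : Set (ℝ × ℝ)}
  {f g : ℝ × ℝ → F} {p : ℝ × ℝ}

lemma dz_congr (h : f =ᶠ[𝓝 p] g) : dz f p = dz g p := by
  rw [dz, dz, pu_congr h, pv_congr h]

lemma dzbar_congr (h : f =ᶠ[𝓝 p] g) : dzbar f p = dzbar g p := by
  rw [dzbar, dzbar, pu_congr h, pv_congr h]

lemma dz_const (c : F) : dz (fun _ => c) p = 0 := by
  simp [dz, pu, pv]

lemma dzbar_const (c : F) : dzbar (fun _ => c) p = 0 := by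
  simp [dzbar, pu, pv]

lemma contDiffOn_dz (hU : IsOpen U) (hf : ContDiffOn ℝ ∞ f U) : ContDiffOn ℝ ∞ (dz f) U :=
  ((contDiffOn_pu hU hf).sub ((contDiffOn_pv hU hf).const_smul I)).const_smul _

lemma contDiffOn_dzbar (hU : IsOpen U) (hf : ContDiffOn ℝ ∞ f U) : ContDiffOn ℝ ∞ (dzbar f) U :=
  ((contDiffOn_pu hU hf).add ((contDiffOn_pv hU hf).const_smul I)).const_smul _

lemma hasFDerivAt_dz (hu : DifferentiableAt ℝ (pu f) p) (hv : DifferentiableAt ℝ (pv f) p) :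
    HasFDerivAt (dz f) ((2 : ℂ)⁻¹ • (fderiv ℝ (pu f) p - I • fderiv ℝ (pv f) p)) p :=
  (hu.hasFDerivAt.sub (hv.hasFDerivAt.const_smul I)).const_smul _

lemma hasFDerivAt_dzbar (hu : DifferentiableAt ℝ (pu f) p) (hv : DifferentiableAt ℝ (pv f) p) :
    HasFDerivAt (dzbar f) ((2 : ℂ)⁻¹ • (fderiv ℝ (pu f) p + I • fderiv ℝ (pv f) p)) p :=
  (hu.hasFDerivAt.add (hv.hasFDerivAt.const_smul I)).const_smul _

lemma dzbar_dz (hU : IsOpen U) (hf : ContDiffOn ℝ ∞ f U) (hp : p ∈ U) :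
    dzbar (dz f) p = (4 : ℂ)⁻¹ • lap f p := by
  have hdz := hasFDerivAt_dz ((contDiffOn_pu hU hf).differentiableAt_of_isOpen hU hp)
    ((contDiffOn_pv hU hf).differentiableAt_of_isOpen hU hp)
  have h1 : pu (dz f) p = (2 : ℂ)⁻¹ • (pu (pu f) p - I • pu (pv f) p) := by
    rw [pu, hdz.fderiv]; rfl
  have h2 : pv (dz f) p = (2 : ℂ)⁻¹ • (pv (pu f) p - I • pv (pv f) p) := by
    rw [pv, hdz.fderiv]; rfl
  rw [dzbar, h1, h2, pu_pv_comm hU hf hp, lap]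
  linear_combination (norm := module) (-(4 : ℂ)⁻¹ * I_sq) • pv (pv f) p

lemma dz_dzbar (hU : IsOpen U) (hf : ContDiffOn ℝ ∞ f U) (hp : p ∈ U) :
    dz (dzbar f) p = (4 : ℂ)⁻¹ • lap f p := by
  have hdz := hasFDerivAt_dzbar ((contDiffOn_pu hU hf).differentiableAt_of_isOpen hU hp)
    ((contDiffOn_pv hU hf).differentiableAt_of_isOpen hU hp)
  have h1 : pu (dzbar f) p = (2 : ℂ)⁻¹ • (pu (pu f) p + I • pu (pv f) p) := by
    rw [pu, hdz.fderiv]; rfl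
  have h2 : pv (dzbar f) p = (2 : ℂ)⁻¹ • (pv (pu f) p + I • pv (pv f) p) := by
    rw [pv, hdz.fderiv]; rfl
  rw [dz, h1, h2, pu_pv_comm hU hf hp, lap]
  linear_combination (norm := module) (-(4 : ℂ)⁻¹ * I_sq) • pv (pv f) p

end Wirtinger

section ProductRules

variable {U : Set (ℝ × ℝ)} {f g : ℝ × ℝ → Fin 3 → ℂ} {k : ℝ × ℝ → ℂ} {p : ℝ × ℝ}

lemma fderiv_cdot_apply (hf : DifferentiableAt ℝ f p) (hg : DifferentiableAt ℝ g p)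
    (w : ℝ × ℝ) : fderiv ℝ (fun q => cdot (f q) (g q)) p w
      = cdot (fderiv ℝ f p w) (g p) + cdot (f p) (fderiv ℝ g p w) := by
  have hfg := HasFDerivAt.fun_sum (u := Finset.univ) fun j _ =>
    (hasFDerivAt_pi'.1 hf.hasFDerivAt j).fun_mul (hasFDerivAt_pi'.1 hg.hasFDerivAt j)
  rw [show (fun q => cdot (f q) (g q)) = fun q => ∑ j, f q j * g q j from rfl, hfg.fderiv]
  simp [cdot, Finset.sum_add_distrib, mul_comm, add_comm]

lemma dz_cdot (hf : DifferentiableAt ℝ f p) (hg : DifferentiableAt ℝ g p) :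
    dz (fun q => cdot (f q) (g q)) p = cdot (dz f p) (g p) + cdot (f p) (dz g p) := by
  simp only [dz, pu, pv, fderiv_cdot_apply hf hg]
  simp only [cdot_eq_dotProduct, smul_dotProduct,
    dotProduct_smul, sub_dotProduct, dotProduct_sub, smul_eq_mul]
  ring

lemma dzbar_cdot (hf : DifferentiableAt ℝ f p) (hg : DifferentiableAt ℝ g p) :
    dzbar (fun q => cdot (f q) (g q)) p = cdot (dzbar f p) (g p) + cdot (f p) (dzbar g p) := by
  simp only [dzbar, pu, pv, fderiv_cdot_apply hf hg]
  simp only [cdot_eq_dotProduct, smul_dotProduct,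
    dotProduct_smul, add_dotProduct, dotProduct_add, smul_eq_mul]
  ring

lemma dz_mul {f g : ℝ × ℝ → ℂ} (hf : DifferentiableAt ℝ f p) (hg : DifferentiableAt ℝ g p) :
    dz (fun q => f q * g q) p = dz f p * g p + f p * dz g p := by
  simp only [dz, pu, pv, fderiv_fun_mul hf hg, add_apply, smul_apply, smul_eq_mul]
  ring

lemma cdot_dz_add_cdot_dz (hU : IsOpen U) (hp : p ∈ U) (hf : DifferentiableAt ℝ f p)
    (hg : DifferentiableAt ℝ g p) (hk : ∀ q ∈ U, cdot (f q) (g q) = k q) :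
    cdot (dz f p) (g p) + cdot (f p) (dz g p) = dz k p := by
  rw [← dz_cdot hf hg]
  exact dz_congr (Filter.eventually_of_mem (hU.mem_nhds hp) hk)

lemma cdot_dzbar_add_cdot_dzbar (hU : IsOpen U) (hp : p ∈ U) (hf : DifferentiableAt ℝ f p)
    (hg : DifferentiableAt ℝ g p) (hk : ∀ q ∈ U, cdot (f q) (g q) = k q) :
    cdot (dzbar f p) (g p) + cdot (f p) (dzbar g p) = dzbar k p := by
  rw [← dzbar_cdot hf hg]
  exact dzbar_congr (Filter.eventually_of_mem (hU.mem_nhds hp) hk)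

end ProductRules

section Complexification

open Complex

variable {U : Set (ℝ × ℝ)} {f : ℝ × ℝ → E3} {p : ℝ × ℝ}

def toCL : E3 →L[ℝ] (Fin 3 → ℂ) :=
  ContinuousLinearMap.pi fun j => ofRealCLM.comp (EuclideanSpace.proj j)

lemma toCL_apply (x : E3) : toCL x = toC x := rfl

lemma contDiffOn_toC (hf : ContDiffOn ℝ ∞ f U) : ContDiffOn ℝ ∞ (fun q => toC (f q)) U :=
  toCL.contDiff.comp_contDiffOn hf

lemma hasFDerivAt_toC (hf : DifferentiableAt ℝ f p) :
    HasFDerivAt (fun q => toC (f q)) (toCL.comp (fderiv ℝ f p)) p :=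
  toCL.hasFDerivAt.comp p hf.hasFDerivAt

lemma pu_toC (hf : DifferentiableAt ℝ f p) : pu (fun q => toC (f q)) p = toC (pu f p) := by
  rw [pu, (hasFDerivAt_toC hf).fderiv]; rfl

lemma pv_toC (hf : DifferentiableAt ℝ f p) : pv (fun q => toC (f q)) p = toC (pv f p) := by
  rw [pv, (hasFDerivAt_toC hf).fderiv]; rfl

lemma phiz_eq_dz (hf : DifferentiableAt ℝ f p) : phiz f p = dz (fun q => toC (f q)) p := by
  rw [dz, pu_toC hf, pv_toC hf]; rfl

lemma phizbar_eq_dzbar (hf : DifferentiableAt ℝ f p) :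
    phizbar f p = dzbar (fun q => toC (f q)) p := by
  rw [dzbar, pu_toC hf, pv_toC hf]; rfl

lemma contDiffOn_phiz (hU : IsOpen U) (hf : ContDiffOn ℝ ∞ f U) : ContDiffOn ℝ ∞ (phiz f) U :=
  ((contDiffOn_toC (contDiffOn_pu hU hf)).sub
    ((contDiffOn_toC (contDiffOn_pv hU hf)).const_smul I)).const_smul _

lemma contDiffOn_phizbar (hU : IsOpen U) (hf : ContDiffOn ℝ ∞ f U) :
    ContDiffOn ℝ ∞ (phizbar f) U :=
  ((contDiffOn_toC (contDiffOn_pu hU hf)).add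
    ((contDiffOn_toC (contDiffOn_pv hU hf)).const_smul I)).const_smul _

lemma lap_toC (hU : IsOpen U) (hf : ContDiffOn ℝ ∞ f U) (hp : p ∈ U) :
    lap (fun q => toC (f q)) p = toC (lap f p) := by
  have hu : pu (fun q => toC (f q)) =ᶠ[𝓝 p] fun q => toC (pu f q) :=
    Filter.eventually_of_mem (hU.mem_nhds hp) fun q hq =>
      pu_toC (hf.differentiableAt_of_isOpen hU hq)
  have hv : pv (fun q => toC (f q)) =ᶠ[𝓝 p] fun q => toC (pv f q) :=
    Filter.eventually_of_mem (hU.mem_nhds hp) fun q hq =>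
      pv_toC (hf.differentiableAt_of_isOpen hU hq)
  rw [lap, pu_congr hu, pv_congr hv,
    pu_toC ((contDiffOn_pu hU hf).differentiableAt_of_isOpen hU hp),
    pv_toC ((contDiffOn_pv hU hf).differentiableAt_of_isOpen hU hp), lap]
  simp only [← toCL_apply, map_add]

lemma dzbar_phiz (hU : IsOpen U) (hf : ContDiffOn ℝ ∞ f U) (hp : p ∈ U) :
    dzbar (phiz f) p = (4 : ℂ)⁻¹ • toC (lap f p) := by
  have h : phiz f =ᶠ[𝓝 p] dz (fun q => toC (f q)) :=
    Filter.eventually_of_mem (hU.mem_nhds hp) fun q hq =>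
      phiz_eq_dz (hf.differentiableAt_of_isOpen hU hq)
  rw [dzbar_congr h, dzbar_dz hU (contDiffOn_toC hf) hp, lap_toC hU hf hp]

lemma dz_phizbar (hU : IsOpen U) (hf : ContDiffOn ℝ ∞ f U) (hp : p ∈ U) :
    dz (phizbar f) p = (4 : ℂ)⁻¹ • toC (lap f p) := by
  have h : phizbar f =ᶠ[𝓝 p] dzbar (fun q => toC (f q)) :=
    Filter.eventually_of_mem (hU.mem_nhds hp) fun q hq =>
      phizbar_eq_dzbar (hf.differentiableAt_of_isOpen hU hq)
  rw [dz_congr h, dz_dzbar hU (contDiffOn_toC hf) hp, lap_toC hU hf hp]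

lemma contDiffOn_cross {g : ℝ × ℝ → E3} (hf : ContDiffOn ℝ ∞ f U) (hg : ContDiffOn ℝ ∞ g U) :
    ContDiffOn ℝ ∞ (fun q => cross (f q) (g q)) U := by
  have hfj := (contDiffOn_piLp 2).1 hf
  have hgj := (contDiffOn_piLp 2).1 hg
  rw [contDiffOn_piLp]
  intro j
  fin_cases j <;> simp only [ofLp_cross] <;> simp <;> fun_prop

end Complexification

namespace IsConfImm

open Complex

variable {U : Set (ℝ × ℝ)} {φ : ℝ × ℝ → E3} {lam : ℝ × ℝ → ℝ} {p : ℝ × ℝ}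

lemma isConfImmAt (h : IsConfImm U φ lam) (hp : p ∈ U) : IsConfImmAt φ lam p := h.2.2.2 p hp

lemma contDiffOn_nvec (h : IsConfImm U φ lam) : ContDiffOn ℝ ∞ (nvec φ) U := by
  have hN := contDiffOn_cross (contDiffOn_pu h.1 h.2.1) (contDiffOn_pv h.1 h.2.1)
  have hN0 : ∀ q ∈ U, cross (pu φ q) (pv φ q) ≠ 0 := fun q hq => (h.isConfImmAt hq).cross_ne_zero
  exact ((hN.norm ℝ hN0).inv fun q hq => norm_ne_zero_iff.2 (hN0 q hq)).smul hN

lemma contDiffOn_mcurv (h : IsConfImm U φ lam) :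
    ContDiffOn ℝ ∞ (fun q => (mcurv φ lam q : ℂ)) U := by
  have hlap : ContDiffOn ℝ ∞ (lap φ) U :=
    (contDiffOn_pu h.1 (contDiffOn_pu h.1 h.2.1)).add (contDiffOn_pv h.1 (contDiffOn_pv h.1 h.2.1))
  have hH : ContDiffOn ℝ ∞ (mcurv φ lam) U :=
    ((hlap.inner ℝ h.contDiffOn_nvec).div (contDiffOn_const.mul (h.2.2.1.pow 2))) fun q hq =>
      by have := (h.isConfImmAt hq).1; positivity
  exact ofRealCLM.contDiff.comp_contDiffOn hH

lemma differentiableAt_phiz (h : IsConfImm U φ lam) (hp : p ∈ U) :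
    DifferentiableAt ℝ (phiz φ) p :=
  (contDiffOn_phiz h.1 h.2.1).differentiableAt_of_isOpen h.1 hp

lemma differentiableAt_phizbar (h : IsConfImm U φ lam) (hp : p ∈ U) :
    DifferentiableAt ℝ (phizbar φ) p :=
  (contDiffOn_phizbar h.1 h.2.1).differentiableAt_of_isOpen h.1 hp

lemma differentiableAt_dzbar_phiz (h : IsConfImm U φ lam) (hp : p ∈ U) :
    DifferentiableAt ℝ (dzbar (phiz φ)) p :=
  (contDiffOn_dzbar h.1 (contDiffOn_phiz h.1 h.2.1)).differentiableAt_of_isOpen h.1 hp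

lemma differentiableAt_dz_phiz (h : IsConfImm U φ lam) (hp : p ∈ U) :
    DifferentiableAt ℝ (dz (phiz φ)) p :=
  (contDiffOn_dz h.1 (contDiffOn_phiz h.1 h.2.1)).differentiableAt_of_isOpen h.1 hp

lemma differentiableAt_nvec (h : IsConfImm U φ lam) (hp : p ∈ U) :
    DifferentiableAt ℝ (fun q => toC (nvec φ q)) p :=
  (contDiffOn_toC h.contDiffOn_nvec).differentiableAt_of_isOpen h.1 hp

lemma cdot_dzbar_phiz_nvec (h : IsConfImm U φ lam) (hp : p ∈ U) :
    cdot (dzbar (phiz φ) p) (toC (nvec φ p)) = (lam p : ℂ) ^ 2 / 2 * mcurv φ lam p := by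
  have hl : (lam p : ℂ) ≠ 0 := ofReal_ne_zero.2 (h.isConfImmAt hp).1.ne'
  rw [dzbar_phiz h.1 h.2.1 hp, cdot_eq_dotProduct, smul_dotProduct, ← cdot_eq_dotProduct,
    cdot_toC, mcurv, smul_eq_mul]
  push_cast
  field_simp
  ring

lemma cdot_dzbar_phiz_phiz (h : IsConfImm U φ lam) (hp : p ∈ U) :
    cdot (dzbar (phiz φ) p) (phiz φ p) = 0 := by
  have hd := h.differentiableAt_phiz hp
  have := cdot_dzbar_add_cdot_dzbar h.1 hp hd hd fun q hq => (h.isConfImmAt hq).cdot_phiz_phiz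
  rw [dzbar_const, cdot_comm (phiz φ p)] at this
  linear_combination this / 2

lemma cdot_dzbar_phiz_phizbar (h : IsConfImm U φ lam) (hp : p ∈ U) :
    cdot (dzbar (phiz φ) p) (phizbar φ p) = 0 := by
  have hd := h.differentiableAt_phizbar hp
  have := cdot_dz_add_cdot_dz h.1 hp hd hd fun q hq => (h.isConfImmAt hq).cdot_phizbar_phizbar
  rw [dz_const, cdot_comm (phizbar φ p), dz_phizbar h.1 h.2.1 hp,
    ← dzbar_phiz h.1 h.2.1 hp] at this
  linear_combination this / 2

lemma cdot_dz_phiz_phiz (h : IsConfImm U φ lam) (hp : p ∈ U) :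
    cdot (dz (phiz φ) p) (phiz φ p) = 0 := by
  have hd := h.differentiableAt_phiz hp
  have := cdot_dz_add_cdot_dz h.1 hp hd hd fun q hq => (h.isConfImmAt hq).cdot_phiz_phiz
  rw [dz_const, cdot_comm (phiz φ p)] at this
  linear_combination this / 2

lemma cdot_dz_phiz_phizbar (h : IsConfImm U φ lam) (hp : p ∈ U) :
    cdot (dz (phiz φ) p) (phizbar φ p) = dz (fun q => (lam q : ℂ) ^ 2 / 2) p := by
  have := cdot_dz_add_cdot_dz h.1 hp (h.differentiableAt_phiz hp) (h.differentiableAt_phizbar hp)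
    fun q hq => (h.isConfImmAt hq).cdot_phiz_phizbar
  rwa [dz_phizbar h.1 h.2.1 hp, ← dzbar_phiz h.1 h.2.1 hp, cdot_comm (phiz φ p),
    h.cdot_dzbar_phiz_phiz hp, add_zero] at this

lemma cdot_dz_nvec_nvec (h : IsConfImm U φ lam) (hp : p ∈ U) :
    cdot (dz (fun q => toC (nvec φ q)) p) (toC (nvec φ p)) = 0 := by
  have hd := h.differentiableAt_nvec hp
  have := cdot_dz_add_cdot_dz h.1 hp hd hd fun q hq =>
    cdot_nvec_nvec (h.isConfImmAt hq).cross_ne_zero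
  rw [dz_const, cdot_comm (toC (nvec φ p))] at this
  linear_combination this / 2

lemma cdot_dzbar_nvec_nvec (h : IsConfImm U φ lam) (hp : p ∈ U) :
    cdot (dzbar (fun q => toC (nvec φ q)) p) (toC (nvec φ p)) = 0 := by
  have hd := h.differentiableAt_nvec hp
  have := cdot_dzbar_add_cdot_dzbar h.1 hp hd hd fun q hq =>
    cdot_nvec_nvec (h.isConfImmAt hq).cross_ne_zero
  rw [dzbar_const, cdot_comm (toC (nvec φ p))] at this
  linear_combination this / 2

lemma cdot_dzbar_nvec_phiz (h : IsConfImm U φ lam) (hp : p ∈ U) :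
    cdot (dzbar (fun q => toC (nvec φ q)) p) (phiz φ p)
      = -((lam p : ℂ) ^ 2 / 2 * mcurv φ lam p) := by
  have := cdot_dzbar_add_cdot_dzbar h.1 hp (h.differentiableAt_nvec hp)
    (h.differentiableAt_phiz hp) fun _ _ => cdot_nvec_phiz
  rw [dzbar_const, cdot_comm (toC (nvec φ p)), h.cdot_dzbar_phiz_nvec hp] at this
  linear_combination this

lemma cdot_dzbar_phiz_dz_nvec (h : IsConfImm U φ lam) (hp : p ∈ U) :
    cdot (dzbar (phiz φ) p) (dz (fun q => toC (nvec φ q)) p) = 0 := by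
  rw [(h.isConfImmAt hp).cdot_eq_frame, h.cdot_dzbar_phiz_phiz hp, h.cdot_dzbar_phiz_phizbar hp,
    h.cdot_dz_nvec_nvec hp]
  ring

lemma cdot_dz_phiz_dzbar_nvec (h : IsConfImm U φ lam) (hp : p ∈ U) :
    cdot (dz (phiz φ) p) (dzbar (fun q => toC (nvec φ q)) p)
      = -(mcurv φ lam p * dz (fun q => (lam q : ℂ) ^ 2 / 2) p) := by
  have hl : (lam p : ℂ) ≠ 0 := ofReal_ne_zero.2 (h.isConfImmAt hp).1.ne'
  rw [(h.isConfImmAt hp).cdot_eq_frame, h.cdot_dz_phiz_phiz hp, h.cdot_dz_phiz_phizbar hp,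
    h.cdot_dzbar_nvec_phiz hp, h.cdot_dzbar_nvec_nvec hp]
  field_simp
  ring

lemma cdot_dz_dzbar_phiz_nvec (h : IsConfImm U φ lam) (hp : p ∈ U) :
    cdot (dz (dzbar (phiz φ)) p) (toC (nvec φ p))
      = dz (fun q => (lam q : ℂ) ^ 2 / 2 * mcurv φ lam q) p := by
  have := cdot_dz_add_cdot_dz h.1 hp (h.differentiableAt_dzbar_phiz hp)
    (h.differentiableAt_nvec hp) fun q hq => h.cdot_dzbar_phiz_nvec hq
  rwa [h.cdot_dzbar_phiz_dz_nvec hp, add_zero] at this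

end IsConfImm

/-- Codazzi equation: ∂_z̄ μ = (λ²/2) ∂_z H. -/
theorem conformal_codazzi_equation
    (U : Set (ℝ × ℝ)) (φ : ℝ × ℝ → E3) (lam : ℝ × ℝ → ℝ)
    (h : IsConfImm U φ lam) :
    ∀ p ∈ U,
      dzbar (fun q => muQ φ q) p
        = (lam p : ℂ) ^ 2 / 2 * dz (fun q => (mcurv φ lam q : ℂ)) p := by
  intro p hp
  have hZ := contDiffOn_phiz h.1 h.2.1
  have hlam : DifferentiableAt ℝ (fun q => (lam q : ℂ) ^ 2 / 2) p := by
    have := h.2.2.1.differentiableAt_of_isOpen h.1 hp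
    fun_prop
  have hH : DifferentiableAt ℝ (fun q => (mcurv φ lam q : ℂ)) p :=
    h.contDiffOn_mcurv.differentiableAt_of_isOpen h.1 hp
  calc dzbar (fun q => muQ φ q) p
      = cdot (dzbar (dz (phiz φ)) p) (toC (nvec φ p))
          + cdot (dz (phiz φ) p) (dzbar (fun q => toC (nvec φ q)) p) :=
        dzbar_cdot (h.differentiableAt_dz_phiz hp) (h.differentiableAt_nvec hp)
    _ = dz (fun q => (lam q : ℂ) ^ 2 / 2 * mcurv φ lam q) p
          - mcurv φ lam p * dz (fun q => (lam q : ℂ) ^ 2 / 2) p := by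
        rw [dzbar_dz h.1 hZ hp, ← dz_dzbar h.1 hZ hp, h.cdot_dz_dzbar_phiz_nvec hp,
          h.cdot_dz_phiz_dzbar_nvec hp, sub_eq_add_neg]
    _ = (lam p : ℂ) ^ 2 / 2 * dz (fun q => (mcurv φ lam q : ℂ)) p := by
        rw [dz_mul hlam hH]
        ring
end
end

section
/- Let φ be a conformal immersion on an open set U ⊆ ℝ² with conformal factor λ, with unit normal n := (φ_u × φ_v)/‖φ_u × φ_v‖, second fundamental form coefficients L := ⟨φ_uu, n⟩, M := ⟨φ_uv, n⟩, N := ⟨φ_vv, n⟩, mean curvature H := (L + N)/(2λ²), Gaussian curvature K := (LN − M²)/λ⁴, and μ := (∂_z φ_z, n). Then at every point of U, |μ|² = (λ⁴/4)(H² − K); in particular H² ≥ K on U. -/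
open Complex

noncomputable section

/-! Since `φ_uv = φ_vu`, `φ_zz = ¼(φ_uu − φ_vv − 2i φ_uv)`, so `μ = ¼(L − N) − ½M i` is the
trace-free part of the second fundamental form, whose trace gives `H`. Hence
`|μ|² = ((L − N)² + 4M²)/16 = (λ⁴/4)(H² − K)`, a sum of squares. -/

section SecondPartials

variable {F : Type} [NormedAddCommGroup F] [NormedSpace ℝ F] {f : ℝ × ℝ → F} {p : ℝ × ℝ}

lemma ContDiffAt.differentiableAt_fderiv (hf : ContDiffAt ℝ 2 f p) :
    DifferentiableAt ℝ (fderiv ℝ f) p :=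
  (hf.fderiv_right (m := 1) le_rfl).differentiableAt one_ne_zero

lemma fderiv_fderiv_apply_const (hf : DifferentiableAt ℝ (fderiv ℝ f) p) (v w : ℝ × ℝ) :
    fderiv ℝ (fun q => fderiv ℝ f q v) p w = fderiv ℝ (fderiv ℝ f) p w v := by
  simp [fderiv_clm_apply hf (differentiableAt_const v)]

lemma pv_pu_eq_pu_pv (hf : ContDiffAt ℝ 2 f p) : pv (pu f) p = pu (pv f) p := by
  show fderiv ℝ (fun q => fderiv ℝ f q (1, 0)) p (0, 1)
    = fderiv ℝ (fun q => fderiv ℝ f q (0, 1)) p (1, 0)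
  rw [fderiv_fderiv_apply_const hf.differentiableAt_fderiv,
    fderiv_fderiv_apply_const hf.differentiableAt_fderiv]
  exact (hf.isSymmSndFDerivAt (by simp)).eq _ _

end SecondPartials

def toCCLM : E3 →L[ℝ] (Fin 3 → ℂ) :=
  ContinuousLinearMap.pi fun j => Complex.ofRealCLM.comp (EuclideanSpace.proj j)

lemma fderiv_phiz_apply {f : ℝ × ℝ → E3} {p : ℝ × ℝ} (hf : DifferentiableAt ℝ (fderiv ℝ f) p)
    (w : ℝ × ℝ) :
    fderiv ℝ (phiz f) p w
      = (2 : ℂ)⁻¹ • (toC (fderiv ℝ (pu f) p w) - Complex.I • toC (fderiv ℝ (pv f) p w)) := by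
  have hpart (v : ℝ × ℝ) : HasFDerivAt (fun q => toCCLM (fderiv ℝ f q v))
      (toCCLM.comp (fderiv ℝ (fun q => fderiv ℝ f q v) p)) p :=
    toCCLM.hasFDerivAt.comp p (hf.clm_apply (differentiableAt_const v)).hasFDerivAt
  have hphiz := (((hpart (1, 0)).sub ((hpart (0, 1)).const_smul Complex.I)).const_smul
    (2 : ℂ)⁻¹)
  rw [(show HasFDerivAt (phiz f) _ p from hphiz).fderiv]
  rfl

lemma dz_phiz {f : ℝ × ℝ → E3} {p : ℝ × ℝ} (hf : ContDiffAt ℝ 2 f p) :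
    dz (phiz f) p = (4 : ℂ)⁻¹ •
      (toC (pu (pu f) p) - toC (pv (pv f) p) - (2 * Complex.I) • toC (pu (pv f) p)) := by
  have hf' := hf.differentiableAt_fderiv
  rw [dz, pu, pv, fderiv_phiz_apply hf', fderiv_phiz_apply hf', show fderiv ℝ (pu f) p (0, 1) = pu (pv f) p from pv_pu_eq_pu_pv hf]
  simp only [pu, pv]
  funext j
  simp only [Pi.smul_apply, Pi.sub_apply, smul_eq_mul]
  linear_combination ((1 : ℂ) / 4 * toC (fderiv ℝ (pv f) p (0, 1)) j) * Complex.I_sq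

lemma toC_dotProduct_toC (a b : E3) : dotProduct (toC a) (toC b) = ip a b := by
  simp [dotProduct, toC, ip, PiLp.inner_apply, Fin.sum_univ_three, mul_comm]

lemma muQ_eq {φ : ℝ × ℝ → E3} {p : ℝ × ℝ} (hφ : ContDiffAt ℝ 2 φ p) :
    muQ φ p = (((ip (pu (pu φ) p) (nvec φ p) - ip (pv (pv φ) p) (nvec φ p)) / 4 : ℝ) : ℂ)
      + ((-ip (pu (pv φ) p) (nvec φ p) / 2 : ℝ) : ℂ) * Complex.I := by
  rw [muQ, cdot, ← dotProduct, dz_phiz hφ]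
  simp only [smul_dotProduct, sub_dotProduct, toC_dotProduct_toC, smul_eq_mul]
  push_cast
  ring

lemma norm_muQ_sq {φ : ℝ × ℝ → E3} {p : ℝ × ℝ} (hφ : ContDiffAt ℝ 2 φ p) :
    ‖muQ φ p‖ ^ 2 = ((ip (pu (pu φ) p) (nvec φ p) - ip (pv (pv φ) p) (nvec φ p)) / 4) ^ 2
      + (ip (pu (pv φ) p) (nvec φ p) / 2) ^ 2 := by
  rw [muQ_eq hφ, Complex.sq_norm, Complex.normSq_add_mul_I]
  ring

lemma sq_mean_sub_gauss {lam : ℝ} (hlam : lam ≠ 0) (L M N : ℝ) :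
    ((L + N) / (2 * lam ^ 2)) ^ 2 - (L * N - M ^ 2) / lam ^ 4
      = ((L - N) ^ 2 + 4 * M ^ 2) / (4 * lam ^ 4) := by
  field_simp
  ring

/-- |μ|² = (λ⁴/4)(H² − K); in particular H² ≥ K, where
L, M, N are the second fundamental form coefficients, H = (L+N)/(2λ²) and
K = (LN − M²)/λ⁴. -/
theorem conformal_mu_norm_squared
    (U : Set (ℝ × ℝ)) (φ : ℝ × ℝ → E3) (lam : ℝ × ℝ → ℝ)
    (h : IsConfImm U φ lam) :
    ∀ p ∈ U,
      ‖muQ φ p‖ ^ 2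
        = (lam p) ^ 4 / 4
            * (((ip (pu (pu φ) p) (nvec φ p) + ip (pv (pv φ) p) (nvec φ p))
                  / (2 * (lam p) ^ 2)) ^ 2
               - (ip (pu (pu φ) p) (nvec φ p) * ip (pv (pv φ) p) (nvec φ p)
                    - ip (pu (pv φ) p) (nvec φ p) ^ 2) / (lam p) ^ 4) ∧
      (ip (pu (pu φ) p) (nvec φ p) * ip (pv (pv φ) p) (nvec φ p)
          - ip (pu (pv φ) p) (nvec φ p) ^ 2) / (lam p) ^ 4
        ≤ ((ip (pu (pu φ) p) (nvec φ p) + ip (pv (pv φ) p) (nvec φ p))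
              / (2 * (lam p) ^ 2)) ^ 2 := by
  obtain ⟨hU, hφ, -, hpts⟩ := h
  intro p hp
  have hφp : ContDiffAt ℝ 2 φ p :=
    (hφ.contDiffAt (hU.mem_nhds hp)).of_le (WithTop.coe_le_coe.mpr le_top)
  have hlam : lam p ≠ 0 := (hpts p hp).1.ne'
  rw [norm_muQ_sq hφp, ← sub_nonneg, sq_mean_sub_gauss hlam]
  constructor
  · field_simp
    ring
  · positivity
end
end
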